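/- With ℓ := 1/(2(k - a)) > 0 and ε := k - k* where k* = a + √(a² + q/r), the scalar LQR cost gap satisfies J(k) - J(k*) = r ℓ ε² for all k > a. -/

import Mathlib

/-! The minimiser k* is the root above `a` of the scalar Riccati equation `r k² - 2 a r k = q`.
Eliminating `q` with it, the optimal cost collapses to `J k* = r k*`, and
`J k - r k* = r (k - k*)² / (2 (k - a))` becomes a polynomial identity. -/

lemma riccati_of_eq_add_sqrt {a q r kstar : ℝ} (hr : r ≠ 0) (hd : 0 ≤ a ^ 2 + q / r)
    (hks : kstar = a + √(a ^ 2 + q / r)) :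
    r * kstar ^ 2 - 2 * a * r * kstar = q := by
  have hsq : √(a ^ 2 + q / r) ^ 2 = a ^ 2 + q / r := Real.sq_sqrt hd
  have : r * kstar ^ 2 - 2 * a * r * kstar = r * (√(a ^ 2 + q / r) ^ 2 - a ^ 2) := by
    rw [hks]; ring
  rw [this, hsq]
  field_simp
  ring

lemma lqrCost_riccati_root {a q r kstar : ℝ} (hric : r * kstar ^ 2 - 2 * a * r * kstar = q)
    (hne : kstar ≠ a) :
    (q + r * kstar ^ 2) / (2 * (kstar - a)) = r * kstar := by
  have : 2 * (kstar - a) ≠ 0 := mul_ne_zero two_ne_zero (sub_ne_zero.mpr hne)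
  rw [div_eq_iff this, ← hric]
  ring

lemma lqrCost_sub_riccati_root {a q r k kstar : ℝ} (hric : r * kstar ^ 2 - 2 * a * r * kstar = q)
    (hk : k ≠ a) :
    (q + r * k ^ 2) / (2 * (k - a)) - r * kstar = r * (1 / (2 * (k - a))) * (k - kstar) ^ 2 := by
  have : k - a ≠ 0 := sub_ne_zero.mpr hk
  rw [← hric]
  field_simp
  ring

theorem stmt9 (a q r : ℝ) (hq : 0 < q) (hr : 0 < r)
    (J : ℝ → ℝ) (hJ : ∀ k, J k = (q + r * k ^ 2) / (2 * (k - a)))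
    (kstar : ℝ) (hks : kstar = a + Real.sqrt (a ^ 2 + q / r)) :
    ∀ k > a, J k - J kstar = r * (1 / (2 * (k - a))) * (k - kstar) ^ 2 := by
  intro k hk
  have hd : 0 < a ^ 2 + q / r := by positivity
  have hric := riccati_of_eq_add_sqrt hr.ne' hd.le hks
  have hne : kstar ≠ a := by
    rw [hks]
    exact (lt_add_of_pos_right a (Real.sqrt_pos.mpr hd)).ne'
  rw [hJ, hJ, lqrCost_riccati_root hric hne]
  exact lqrCost_sub_riccati_root hric hk.ne'
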